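/- Let P = |0⟩⟨0| on ℂ^d. For every density matrix ρ on ℂ^d, let ρ̃ = PρP + (I_d−P)ρ(I_d−P). Then O^c(ρ̃) = O^c(ρ) and S(O(ρ̃)) ≥ S(O(ρ)); consequently S(O(ρ)) − S(O^c(ρ)) ≤ S(O(ρ̃)) − S(O^c(ρ̃)), i.e. the coherent information of O does not decrease when the input is replaced by its block-diagonal part with respect to the decomposition ℂ^d = span{|0⟩} ⊕ span{|1⟩,…,|d−1⟩}. -/

import Mathlib

/-!
Write `ρ̃ = PρP + (1 - P)ρ(1 - P)` for the pinching of `ρ` by `P = |0⟩⟨0|`. For a Kraus operator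
`L` with `LP = L` or `LP = 0`, `Lρ̃L† = LρL†`; every Kraus operator of `O^c` is of this kind.
The Kraus operators of `O` split as `K_kP = μ_k|k⟩⟨0|` and `K_k(1 - P) = |d-1⟩⟨k+1|`, which map
into two orthogonal coordinate lines, so `O(ρ̃)` is diagonal and differs from `O(ρ)` only by
off-diagonal cross terms. Finally, the diagonal of a positive semidefinite matrix is the image of
its spectrum under the doubly stochastic matrix `(|U_ij|²)`, `U` an eigenbasis, so by concavity of
`-t log t` its entropy is at most the Shannon entropy of its diagonal, with equality for diagonal
matrices.
-/

open Matrix ComplexOrder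

/-- Von Neumann entropy (base-2) of a matrix: −∑ λᵢ log₂ λᵢ over its eigenvalues
(0 if the matrix is not Hermitian). -/
noncomputable def vnEntropy {n : ℕ} (ρ : Matrix (Fin n) (Fin n) ℂ) : ℝ :=
  if h : ρ.IsHermitian then -∑ i, (h.eigenvalues i) * Real.logb 2 (h.eigenvalues i) else 0

/-- The basis ket |i⟩ of ℂ^d (zero if out of range). -/
noncomputable def bket (d i : ℕ) : Fin d → ℂ := fun p => if (p : ℕ) = i then 1 else 0

/-- The projector |i⟩⟨i| on ℂ^d. -/
noncomputable def bproj (d i : ℕ) : Matrix (Fin d) (Fin d) ℂ :=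
  Matrix.vecMulVec (bket d i) (star (bket d i))

/-- Kraus operator K_k = μ_k|k⟩⟨0| + |d−1⟩⟨k+1| of the channel O. -/
noncomputable def KrO (d : ℕ) (μ : ℕ → ℝ) (k : ℕ) : Matrix (Fin d) (Fin d) ℂ :=
  ((μ k : ℝ) : ℂ) • Matrix.vecMulVec (bket d k) (star (bket d 0)) +
    Matrix.vecMulVec (bket d (d-1)) (star (bket d (k+1)))

/-- The channel O : M_d(ℂ) → M_d(ℂ) with parameters μ₀,…,μ_{d−2}. -/
noncomputable def chanO (d : ℕ) (μ : ℕ → ℝ) (X : Matrix (Fin d) (Fin d) ℂ) :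
    Matrix (Fin d) (Fin d) ℂ :=
  ∑ k ∈ Finset.range (d - 1), KrO d μ k * X * (KrO d μ k)ᴴ

/-- Kraus operator L_j = μ_j|j⟩⟨0| of O^c, for 0 ≤ j ≤ d−2. -/
noncomputable def LrO (d : ℕ) (μ : ℕ → ℝ) (j : ℕ) : Matrix (Fin (d-1)) (Fin d) ℂ :=
  ((μ j : ℝ) : ℂ) • Matrix.vecMulVec (bket (d-1) j) (star (bket d 0))

/-- Kraus operator L_{d−1} = ∑_{i=1}^{d−1}|i−1⟩⟨i| of O^c. -/
noncomputable def VrO (d : ℕ) : Matrix (Fin (d-1)) (Fin d) ℂ :=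
  Matrix.of fun a b => if (b : ℕ) = (a : ℕ) + 1 then 1 else 0

/-- The complementary channel O^c : M_d(ℂ) → M_{d−1}(ℂ). -/
noncomputable def chanOc (d : ℕ) (μ : ℕ → ℝ) (X : Matrix (Fin d) (Fin d) ℂ) :
    Matrix (Fin (d-1)) (Fin (d-1)) ℂ :=
  (∑ j ∈ Finset.range (d - 1), LrO d μ j * X * (LrO d μ j)ᴴ) + VrO d * X * (VrO d)ᴴ

open Real

section DoublyStochastic
variable {n : Type*} [Fintype n] [DecidableEq n]

theorem sum_negMulLog_le_sum_negMulLog_mulVec {M : Matrix n n ℝ} (hM : M ∈ doublyStochastic ℝ n)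
    {x : n → ℝ} (hx : ∀ i, 0 ≤ x i) :
    ∑ j, negMulLog (x j) ≤ ∑ i, negMulLog ((M *ᵥ x) i) := by
  calc ∑ j, negMulLog (x j) = ∑ i, ∑ j, M i j • negMulLog (x j) := by
        rw [Finset.sum_comm]
        simp_rw [smul_eq_mul, ← Finset.sum_mul, sum_col_of_mem_doublyStochastic hM, one_mul]
    _ ≤ ∑ i, negMulLog (∑ j, M i j • x j) := Finset.sum_le_sum fun i _ =>
        concaveOn_negMulLog.le_map_sum (fun j _ => nonneg_of_mem_doublyStochastic hM)
          (sum_row_of_mem_doublyStochastic hM i) (fun j _ => Set.mem_Ici.mpr (hx j))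
    _ = ∑ i, negMulLog ((M *ᵥ x) i) := rfl

theorem normSq_mem_doublyStochastic {U : Matrix n n ℂ} (hU : U ∈ unitaryGroup n ℂ) :
    Matrix.of (fun i j => Complex.normSq (U i j)) ∈ doublyStochastic ℝ n := by
  refine mem_doublyStochastic_iff_sum.mpr ⟨fun i j => Complex.normSq_nonneg _, fun i => ?_,
    fun j => ?_⟩ <;> apply Complex.ofReal_injective <;> push_cast
  · simpa [mul_apply, Complex.mul_conj] using congr_fun₂ (mem_unitaryGroup_iff.mp hU) i i
  · simpa [mul_apply, Complex.conj_mul', Complex.normSq_eq_norm_sq] using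
      congr_fun₂ (mem_unitaryGroup_iff'.mp hU) j j

end DoublyStochastic

open ComplexConjugate in
theorem Complex.re_mul_mul_conj (z a : ℂ) : (z * a * conj z).re = Complex.normSq z * a.re := by
  rw [mul_right_comm, Complex.mul_conj, Complex.re_ofReal_mul]

namespace Matrix.IsHermitian
variable {n : Type*} [Fintype n] [DecidableEq n] {A : Matrix n n ℂ}

noncomputable def eigenvectorWeights (hA : A.IsHermitian) : Matrix n n ℝ :=
  of fun i j => Complex.normSq (hA.eigenvectorUnitary i j)

theorem re_diag_eq_eigenvectorWeights_mulVec (hA : A.IsHermitian) :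
    (fun i => (A i i).re) = hA.eigenvectorWeights *ᵥ hA.eigenvalues := by
  ext i
  rw [congr_fun₂ hA.spectral_theorem i i, Unitary.conjStarAlgAut_apply, mul_apply, Complex.re_sum]
  refine Finset.sum_congr rfl fun j _ => ?_
  rw [mul_diagonal, star_apply, Function.comp_apply, RCLike.star_def, Complex.re_mul_mul_conj]
  rfl

theorem eigenvalues_eq_eigenvectorWeights_transpose_mulVec (hA : A.IsHermitian)
    (hdiag : A.IsDiag) :
    hA.eigenvalues = hA.eigenvectorWeightsᵀ *ᵥ fun i => (A i i).re := by
  ext j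
  have hAv : ∀ v : n → ℂ, A *ᵥ v = fun p => A p p * v p := fun v => by
    funext p
    conv_lhs => rw [← hdiag.diagonal_diag]
    exact mulVec_diagonal _ _ p
  rw [hA.eigenvalues_eq j, hAv, dotProduct_comm, dotProduct, RCLike.re_to_complex, Complex.re_sum]
  refine Finset.sum_congr rfl fun p _ => ?_
  rw [mul_comm (A p p), Pi.star_apply, RCLike.star_def, Complex.re_mul_mul_conj]
  rfl

theorem eigenvectorWeights_mem_doublyStochastic (hA : A.IsHermitian) :
    hA.eigenvectorWeights ∈ doublyStochastic ℝ n :=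
  normSq_mem_doublyStochastic hA.eigenvectorUnitary.2

end Matrix.IsHermitian

namespace Matrix.PosSemidef
variable {n : Type*} [Fintype n] [DecidableEq n] {A : Matrix n n ℂ}

theorem sum_negMulLog_eigenvalues_le (hA : A.PosSemidef) :
    ∑ i, negMulLog (hA.1.eigenvalues i) ≤ ∑ i, negMulLog (A i i).re := by
  simpa only [← hA.1.re_diag_eq_eigenvectorWeights_mulVec] using
    sum_negMulLog_le_sum_negMulLog_mulVec hA.1.eigenvectorWeights_mem_doublyStochastic
      hA.eigenvalues_nonneg

theorem sum_negMulLog_eigenvalues_of_isDiag (hA : A.PosSemidef) (hdiag : A.IsDiag) :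
    ∑ i, negMulLog (hA.1.eigenvalues i) = ∑ i, negMulLog (A i i).re := by
  refine le_antisymm hA.sum_negMulLog_eigenvalues_le ?_
  simpa only [← hA.1.eigenvalues_eq_eigenvectorWeights_transpose_mulVec hdiag] using
    sum_negMulLog_le_sum_negMulLog_mulVec
      (transpose_mem_doublyStochastic_iff.mpr hA.1.eigenvectorWeights_mem_doublyStochastic)
      fun i => (Complex.nonneg_iff.mp (hA.diag_nonneg (i := i))).1

end Matrix.PosSemidef

theorem vnEntropy_eq_sum_negMulLog {n : ℕ} {A : Matrix (Fin n) (Fin n) ℂ} (hA : A.IsHermitian) :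
    vnEntropy A = (∑ i, negMulLog (hA.eigenvalues i)) / log 2 := by
  rw [vnEntropy, dif_pos hA, eq_div_iff (log_pos one_lt_two).ne', ← Finset.sum_neg_distrib,
    Finset.sum_mul]
  refine Finset.sum_congr rfl fun i _ => ?_
  rw [negMulLog, logb]
  field_simp

theorem vnEntropy_le_of_isDiag {n : ℕ} {A B : Matrix (Fin n) (Fin n) ℂ} (hA : A.PosSemidef)
    (hB : B.PosSemidef) (hBdiag : B.IsDiag) (hAB : A.diag = B.diag) :
    vnEntropy A ≤ vnEntropy B := by
  rw [vnEntropy_eq_sum_negMulLog hA.1, vnEntropy_eq_sum_negMulLog hB.1,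
    hB.sum_negMulLog_eigenvalues_of_isDiag hBdiag]
  refine div_le_div_of_nonneg_right ?_ (log_nonneg one_le_two)
  calc ∑ i, negMulLog (hA.1.eigenvalues i) ≤ ∑ i, negMulLog (A i i).re :=
        hA.sum_negMulLog_eigenvalues_le
    _ = ∑ i, negMulLog (B i i).re := by simp only [← diag_apply, hAB]

theorem isDiag_single {n α : Type*} [DecidableEq n] [Zero α] (a : n) (x : α) :
    (single a a x).IsDiag :=
  diagonal_single a x ▸ isDiag_diagonal _

section Pinching
variable {α : Type*} [Ring α] [StarRing α] {m n : Type*} [Fintype n] [DecidableEq n]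

def pinching (P ρ : Matrix n n α) : Matrix n n α := P * ρ * P + (1 - P) * ρ * (1 - P)

variable {P : Matrix n n α}

theorem mul_pinching_mul_conjTranspose (hP : Pᴴ = P) (L : Matrix m n α) (ρ : Matrix n n α) :
    L * pinching P ρ * Lᴴ = L * P * ρ * (L * P)ᴴ + L * (1 - P) * ρ * (L * (1 - P))ᴴ := by
  have hQ : (1 - P)ᴴ = 1 - P := by rw [conjTranspose_sub, conjTranspose_one, hP]
  simp only [pinching, conjTranspose_mul, hP, hQ, Matrix.mul_add, Matrix.add_mul,
    Matrix.mul_assoc]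

theorem mul_pinching_mul_conjTranspose_of_mul_eq_self (hP : Pᴴ = P) {L : Matrix m n α}
    (hL : L * P = L) (ρ : Matrix n n α) : L * pinching P ρ * Lᴴ = L * ρ * Lᴴ := by
  rw [mul_pinching_mul_conjTranspose hP, Matrix.mul_sub, hL, Matrix.mul_one, sub_self]
  simp

theorem mul_pinching_mul_conjTranspose_of_mul_eq_zero (hP : Pᴴ = P) {L : Matrix m n α}
    (hL : L * P = 0) (ρ : Matrix n n α) : L * pinching P ρ * Lᴴ = L * ρ * Lᴴ := by
  rw [mul_pinching_mul_conjTranspose hP, Matrix.mul_sub, hL, Matrix.mul_one, sub_zero]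
  simp

theorem mul_mul_conjTranspose_eq_pinching_add (hP : Pᴴ = P) (L : Matrix m n α)
    (ρ : Matrix n n α) :
    L * ρ * Lᴴ = L * pinching P ρ * Lᴴ + (L * P * ρ * (L * (1 - P))ᴴ +
      L * (1 - P) * ρ * (L * P)ᴴ) := by
  have hL : L = L * P + L * (1 - P) := by rw [← Matrix.mul_add, add_sub_cancel, Matrix.mul_one]
  conv_lhs => rw [hL]
  rw [mul_pinching_mul_conjTranspose hP]
  simp only [conjTranspose_add, Matrix.mul_add, Matrix.add_mul]
  abel

variable [DecidableEq m] in
theorem single_mul_mul_conjTranspose_single (a c : m) (b e : n) (x y : α) (ρ : Matrix n n α) :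
    single a b x * ρ * (single c e y)ᴴ = single a c (x * ρ b e * star y) := by
  rw [conjTranspose_single, single_mul_mul_single]

theorem isDiag_conj_pinching_of_mul_eq_single (hP : Pᴴ = P) {K : Matrix n n α} {a b c e : n}
    {x y : α} (hKP : K * P = single a b x) (hKQ : K * (1 - P) = single c e y)
    (ρ : Matrix n n α) : (K * pinching P ρ * Kᴴ).IsDiag := by
  rw [mul_pinching_mul_conjTranspose hP, hKP, hKQ, single_mul_mul_conjTranspose_single,
    single_mul_mul_conjTranspose_single]
  exact (isDiag_single _ _).add (isDiag_single _ _)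

theorem diag_conj_pinching_of_mul_eq_single (hP : Pᴴ = P) {K : Matrix n n α} {a b c e : n}
    {x y : α} (hac : a ≠ c) (hKP : K * P = single a b x) (hKQ : K * (1 - P) = single c e y)
    (ρ : Matrix n n α) : (K * pinching P ρ * Kᴴ).diag = (K * ρ * Kᴴ).diag := by
  rw [mul_mul_conjTranspose_eq_pinching_add hP K ρ, diag_add, hKP, hKQ,
    single_mul_mul_conjTranspose_single, single_mul_mul_conjTranspose_single, diag_add,
    diag_single_of_ne _ _ _ hac, diag_single_of_ne _ _ _ hac.symm, add_zero, add_zero]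

end Pinching

theorem Matrix.PosSemidef.pinching {n : Type*} [Fintype n] [DecidableEq n] {P ρ : Matrix n n ℂ}
    (hρ : ρ.PosSemidef) (hP : Pᴴ = P) : (pinching P ρ).PosSemidef := by
  have hQ : (1 - P)ᴴ = 1 - P := by rw [conjTranspose_sub, conjTranspose_one, hP]
  have h₁ := hρ.mul_mul_conjTranspose_same P
  have h₂ := hρ.mul_mul_conjTranspose_same (1 - P)
  rw [hP] at h₁
  rw [hQ] at h₂
  exact h₁.add h₂

section Channel
variable {d : ℕ}

theorem bket_eq_single {i : ℕ} (hi : i < d) : bket d i = Pi.single ⟨i, hi⟩ 1 := by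
  ext p
  simp [bket, Pi.single_apply, Fin.ext_iff]

theorem vecMulVec_bket_star_bket {d' i j : ℕ} (hi : i < d) (hj : j < d') :
    vecMulVec (bket d i) (star (bket d' j)) = single ⟨i, hi⟩ ⟨j, hj⟩ 1 := by
  rw [bket_eq_single hi, bket_eq_single hj, Pi.star_single, star_one,
    single_eq_single_vecMulVec_single]

theorem bproj_zero (hd : 0 < d) : bproj d 0 = single ⟨0, hd⟩ ⟨0, hd⟩ 1 :=
  vecMulVec_bket_star_bket hd hd

theorem conjTranspose_bproj_zero (hd : 0 < d) : (bproj d 0)ᴴ = bproj d 0 := by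
  rw [bproj_zero hd, conjTranspose_single, star_one]

theorem Matrix.PosSemidef.chanO {ρ : Matrix (Fin d) (Fin d) ℂ} (hρ : ρ.PosSemidef) (μ : ℕ → ℝ) :
    (chanO d μ ρ).PosSemidef :=
  posSemidef_sum _ fun k _ => hρ.mul_mul_conjTranspose_same (KrO d μ k)

variable (μ : ℕ → ℝ)

theorem KrO_eq_single {k : ℕ} (hk : k < d - 1) :
    KrO d μ k = single ⟨k, by omega⟩ ⟨0, by omega⟩ (μ k : ℂ) +
      single ⟨d - 1, by omega⟩ ⟨k + 1, by omega⟩ 1 := by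
  rw [KrO, vecMulVec_bket_star_bket, vecMulVec_bket_star_bket, smul_single, smul_eq_mul, mul_one]

theorem KrO_mul_bproj_zero {k : ℕ} (hk : k < d - 1) :
    KrO d μ k * bproj d 0 = single ⟨k, by omega⟩ ⟨0, by omega⟩ (μ k : ℂ) := by
  rw [KrO_eq_single μ hk, bproj_zero (by omega), Matrix.add_mul, single_mul_single_same,
    single_mul_single_of_ne _ _ _ _ (Fin.ne_of_val_ne k.succ_ne_zero), mul_one, add_zero]

theorem KrO_mul_one_sub_bproj_zero {k : ℕ} (hk : k < d - 1) :
    KrO d μ k * (1 - bproj d 0) = single ⟨d - 1, by omega⟩ ⟨k + 1, by omega⟩ 1 := by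
  rw [Matrix.mul_sub, Matrix.mul_one, KrO_mul_bproj_zero μ hk, KrO_eq_single μ hk,
    add_sub_cancel_left]

theorem LrO_mul_bproj_zero {j : ℕ} (hj : j < d - 1) : LrO d μ j * bproj d 0 = LrO d μ j := by
  rw [LrO, vecMulVec_bket_star_bket hj (by omega), bproj_zero (by omega), smul_mul,
    single_mul_single_same, mul_one]

theorem VrO_mul_bproj_zero (hd : 0 < d) : VrO d * bproj d 0 = 0 := by
  ext a b
  rw [bproj_zero hd]
  by_cases hb : b = ⟨0, hd⟩
  · subst hb
    simp [VrO]
  · exact mul_single_apply_of_ne _ _ _ _ _ hb _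

theorem chanOc_pinching (hd : 0 < d) (ρ : Matrix (Fin d) (Fin d) ℂ) :
    chanOc d μ (pinching (bproj d 0) ρ) = chanOc d μ ρ := by
  have hP := conjTranspose_bproj_zero hd
  rw [chanOc, chanOc, mul_pinching_mul_conjTranspose_of_mul_eq_zero hP (VrO_mul_bproj_zero hd)]
  congr 1
  exact Finset.sum_congr rfl fun j hj => mul_pinching_mul_conjTranspose_of_mul_eq_self hP
    (LrO_mul_bproj_zero μ (Finset.mem_range.mp hj)) ρ

theorem isDiag_chanO_pinching (hd : 0 < d) (ρ : Matrix (Fin d) (Fin d) ℂ) :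
    (chanO d μ (pinching (bproj d 0) ρ)).IsDiag :=
  Finset.sum_induction _ IsDiag (fun _ _ => IsDiag.add) isDiag_zero fun _ hk =>
    isDiag_conj_pinching_of_mul_eq_single (conjTranspose_bproj_zero hd)
      (KrO_mul_bproj_zero μ (Finset.mem_range.mp hk))
      (KrO_mul_one_sub_bproj_zero μ (Finset.mem_range.mp hk)) ρ

theorem diag_chanO_pinching (hd : 0 < d) (ρ : Matrix (Fin d) (Fin d) ℂ) :
    (chanO d μ (pinching (bproj d 0) ρ)).diag = (chanO d μ ρ).diag := by
  simp only [chanO, diag_sum]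
  refine Finset.sum_congr rfl fun k hk => ?_
  have hk := Finset.mem_range.mp hk
  exact diag_conj_pinching_of_mul_eq_single (conjTranspose_bproj_zero hd)
    (Fin.ne_of_val_ne (show k ≠ d - 1 by omega)) (KrO_mul_bproj_zero μ hk) (KrO_mul_one_sub_bproj_zero μ hk) ρ

end Channel

theorem stmt14 (d : ℕ) (hd : 3 ≤ d) (μ : ℕ → ℝ)
    (ρ : Matrix (Fin d) (Fin d) ℂ) (hρ : ρ.PosSemidef) :
    let P : Matrix (Fin d) (Fin d) ℂ := bproj d 0
    let ρt : Matrix (Fin d) (Fin d) ℂ := P * ρ * P + (1 - P) * ρ * (1 - P)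
    chanOc d μ ρt = chanOc d μ ρ ∧
    vnEntropy (chanO d μ ρ) ≤ vnEntropy (chanO d μ ρt) ∧
    vnEntropy (chanO d μ ρ) - vnEntropy (chanOc d μ ρ) ≤
      vnEntropy (chanO d μ ρt) - vnEntropy (chanOc d μ ρt) := by
  intro P ρt
  have hd₀ : 0 < d := by omega
  have hOc : chanOc d μ ρt = chanOc d μ ρ := chanOc_pinching μ hd₀ ρ
  have hO : vnEntropy (chanO d μ ρ) ≤ vnEntropy (chanO d μ ρt) :=
    vnEntropy_le_of_isDiag (hρ.chanO μ) ((hρ.pinching (conjTranspose_bproj_zero hd₀)).chanO μ)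
      (isDiag_chanO_pinching μ hd₀ ρ) (diag_chanO_pinching μ hd₀ ρ).symm
  exact ⟨hOc, hO, by rw [hOc]; linarith⟩
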